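/- arXiv:quant-ph/0206122 — 4 statements merged into one kernel-verified Lean document; each statement's English description precedes it below -/
import Mathlib

section
/- Suppose messages x ∈ {0,1}^n are encoded as follows: for each x there is an orthonormal family {|φ_{x,l}⟩}_{l ∈ {0,1}^{E-m}} of vectors in a Hilbert space of dimension 2^{E+m}, and Bob decodes by measuring with orthogonal projections {P_y}_{y ∈ {0,1}^n} with mutually orthogonal ranges summing to at most the identity. If x is uniform on {0,1}^n and l is uniform on {0,1}^{E-m}, then the probability of correct decoding, Pr[C] = 2^{-n} 2^{-(E-m)} Σ_{x,l} ‖P_x |φ_{x,l}⟩‖², satisfies Pr[C] ≤ 2^{2m}/2^n. -/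
/-!
Since the projections are self-adjoint, Bessel's inequality for the orthonormal family
`φ x` bounds `∑ₗ ‖P x (φ x l)‖²` by the Hilbert–Schmidt sum `∑ⱼ ‖P x eⱼ‖²` over a basis `e`.
Summing over `x` and using `∑ₓ ‖P x eⱼ‖² ≤ ‖eⱼ‖² = 1`, the total is at most the dimension
`2 ^ (E + m) = 2 ^ (E - m) * 2 ^ (2 * m)`, whatever the encoding.
-/

open Finset

variable {𝕜 E F ι ι' κ : Type*} [RCLike 𝕜]
  [NormedAddCommGroup E] [InnerProductSpace 𝕜 E] [FiniteDimensional 𝕜 E]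
  [NormedAddCommGroup F] [InnerProductSpace 𝕜 F] [FiniteDimensional 𝕜 F]
  [Fintype ι] [Fintype ι'] [Fintype κ]

theorem Orthonormal.sum_norm_sq_apply_le_sum_norm_sq_adjoint (T : E →ₗ[𝕜] F) {v : ι → E}
    (hv : Orthonormal 𝕜 v) (b : OrthonormalBasis ι' 𝕜 F) :
    ∑ l, ‖T (v l)‖ ^ 2 ≤ ∑ j, ‖LinearMap.adjoint T (b j)‖ ^ 2 :=
  calc ∑ l, ‖T (v l)‖ ^ 2 = ∑ l, ∑ j, ‖inner 𝕜 (b j) (T (v l))‖ ^ 2 := by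
        simp only [b.sum_sq_norm_inner_right]
    _ = ∑ j, ∑ l, ‖inner 𝕜 (v l) (LinearMap.adjoint T (b j))‖ ^ 2 := by
        rw [sum_comm]
        refine sum_congr rfl fun j _ => sum_congr rfl fun l _ => ?_
        rw [← LinearMap.adjoint_inner_left, norm_inner_symm]
    _ ≤ ∑ j, ‖LinearMap.adjoint T (b j)‖ ^ 2 :=
        sum_le_sum fun j _ => hv.sum_inner_products_le _

theorem sum_sum_norm_sq_apply_orthonormal_le_finrank (T : κ → E →ₗ[𝕜] F) {v : κ → ι → E}
    (hv : ∀ x, Orthonormal 𝕜 (v x))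
    (hT : ∀ w, ∑ x, ‖LinearMap.adjoint (T x) w‖ ^ 2 ≤ ‖w‖ ^ 2) :
    ∑ x, ∑ l, ‖T x (v x l)‖ ^ 2 ≤ Module.finrank 𝕜 F := by
  let b := stdOrthonormalBasis 𝕜 F
  calc ∑ x, ∑ l, ‖T x (v x l)‖ ^ 2
      ≤ ∑ x, ∑ j, ‖LinearMap.adjoint (T x) (b j)‖ ^ 2 :=
        sum_le_sum fun x _ => (hv x).sum_norm_sq_apply_le_sum_norm_sq_adjoint (T x) b
    _ = ∑ j, ∑ x, ‖LinearMap.adjoint (T x) (b j)‖ ^ 2 := sum_comm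
    _ ≤ ∑ j, ‖b j‖ ^ 2 := sum_le_sum fun j _ => hT (b j)
    _ = Module.finrank 𝕜 F := by simp [b.orthonormal.1]

theorem stmt_4_general (n E m : ℕ) (hm : m ≤ E)
    (φ : (Fin n → Bool) → (Fin (E - m) → Bool) → EuclideanSpace ℂ (Fin (E + m) → Bool))
    (hφ : ∀ x, Orthonormal ℂ (φ x))
    (P : (Fin n → Bool) →
      EuclideanSpace ℂ (Fin (E + m) → Bool) →ₗ[ℂ] EuclideanSpace ℂ (Fin (E + m) → Bool))
    (hsa : ∀ x, LinearMap.adjoint (P x) = P x)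
    (hle : ∀ v, ∑ x, ‖P x v‖ ^ 2 ≤ ‖v‖ ^ 2)
    (PrC : ℝ)
    (hPrC : PrC = ((2 : ℝ) ^ n)⁻¹ * ((2 : ℝ) ^ (E - m))⁻¹ *
      ∑ x, ∑ l, ‖P x (φ x l)‖ ^ 2) :
    PrC ≤ (2 : ℝ) ^ (2 * m) / (2 : ℝ) ^ n := by
  have htotal : ∑ x, ∑ l, ‖P x (φ x l)‖ ^ 2 ≤ (2 : ℝ) ^ (E - m) * 2 ^ (2 * m) := by
    rw [← pow_add, show E - m + 2 * m = E + m by omega]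
    simpa [finrank_euclideanSpace] using
      sum_sum_norm_sq_apply_orthonormal_le_finrank P hφ (by simpa only [hsa] using hle)
  rw [hPrC, mul_assoc, inv_mul_le_iff₀ (by positivity), inv_mul_le_iff₀ (by positivity),
    mul_div_cancel₀ _ (by positivity)]
  exact htotal

theorem stmt_4 (n E m : ℕ) (hm : m ≤ E)
    (φ : (Fin n → Bool) → (Fin (E - m) → Bool) → EuclideanSpace ℂ (Fin (E + m) → Bool))
    (hφ : ∀ x, Orthonormal ℂ (φ x))
    (P : (Fin n → Bool) →
      EuclideanSpace ℂ (Fin (E + m) → Bool) →ₗ[ℂ] EuclideanSpace ℂ (Fin (E + m) → Bool))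
    (hidem : ∀ x, P x ∘ₗ P x = P x)
    (hsa : ∀ x, LinearMap.adjoint (P x) = P x)
    (horth : ∀ x y, x ≠ y → P x ∘ₗ P y = 0)
    (hle : ∀ v, ∑ x, ‖P x v‖ ^ 2 ≤ ‖v‖ ^ 2)
    (PrC : ℝ)
    (hPrC : PrC = ((2 : ℝ) ^ n)⁻¹ * ((2 : ℝ) ^ (E - m))⁻¹ *
      ∑ x, ∑ l, ‖P x (φ x l)‖ ^ 2) :
    PrC ≤ (2 : ℝ) ^ (2 * m) / (2 : ℝ) ^ n :=
  stmt_4_general n E m hm φ hφ P hsa hle PrC hPrC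
end

section
/- Suppose for each message x ∈ {0,1}^n Bob's (unnormalized) mixed state is {2^{m/2} (I_m ⊗ Λ)|φ_{x,l}⟩}_{l ∈ {0,1}^{E-m}}, where Λ = Σ_a √λ_a |a⟩⟨a| with λ_a ≥ 0, Σ_a λ_a = 1, and for each x the family {|φ_{x,l}⟩}_l is orthonormal in ℂ^{2^m} ⊗ ℂ^{2^E}. If Bob decodes with orthogonal projections {P_x} with mutually orthogonal ranges summing to at most the identity, then the probability of correct decoding of a uniformly random message, Pr[C] = 2^{-n} Σ_x 2^m Σ_l ‖P_x (I_m ⊗ Λ)|φ_{x,l}⟩‖², is at most 2^{2m}/2^n. -/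
/-!
By Bessel's inequality applied to the vectors `A† e_j`, an orthonormal family `φ` satisfies
`∑ₗ ‖A φₗ‖² ≤ ‖A‖²_HS = ∑ᵢ ‖A bᵢ‖²` for any orthonormal basis `b`. Taking `A = P_x (I ⊗ Λ)`, summing over `x` and using
`∑ₓ ‖P_x v‖² ≤ ‖v‖²` on the columns of `I ⊗ Λ` bounds the total by
`‖I ⊗ Λ‖²_HS = 2^m · ∑ₐ λₐ = 2^m`.
-/

open Kronecker Matrix

section HilbertSchmidt

variable {𝕜 E F G ι κ X : Type*} [RCLike 𝕜]
  [NormedAddCommGroup E] [InnerProductSpace 𝕜 E] [FiniteDimensional 𝕜 E]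
  [NormedAddCommGroup F] [InnerProductSpace 𝕜 F]
  [NormedAddCommGroup G] [InnerProductSpace 𝕜 G] [FiniteDimensional 𝕜 G]
  [Fintype ι] [Fintype κ]

open scoped InnerProductSpace

theorem Orthonormal.sum_norm_sq_apply_le {φ : ι → E} (hφ : Orthonormal 𝕜 φ)
    (b : OrthonormalBasis κ 𝕜 E) (A : E →ₗ[𝕜] G) :
    ∑ l, ‖A (φ l)‖ ^ 2 ≤ ∑ i, ‖A (b i)‖ ^ 2 :=
  let c := stdOrthonormalBasis 𝕜 G
  calc ∑ l, ‖A (φ l)‖ ^ 2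
      = ∑ j, ∑ l, ‖⟪φ l, A.adjoint (c j)⟫_𝕜‖ ^ 2 := by
        simp_rw [← c.sum_sq_norm_inner_right, norm_inner_symm (φ _),
          LinearMap.adjoint_inner_left]
        exact Finset.sum_comm
    _ ≤ ∑ j, ‖A.adjoint (c j)‖ ^ 2 :=
        Finset.sum_le_sum fun _ _ ↦ hφ.sum_inner_products_le _
    _ = ∑ i, ‖A (b i)‖ ^ 2 := by
        simp_rw [← b.sum_sq_norm_inner_right, LinearMap.adjoint_inner_right,
          ← c.sum_sq_norm_inner_left]
        exact Finset.sum_comm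

theorem sum_sum_norm_sq_le_of_sum_norm_sq_le [Fintype X] (P : X → F →ₗ[𝕜] G)
    (hP : ∀ v, ∑ x, ‖P x v‖ ^ 2 ≤ ‖v‖ ^ 2) (M : E →ₗ[𝕜] F) {φ : X → ι → E}
    (hφ : ∀ x, Orthonormal 𝕜 (φ x)) (b : OrthonormalBasis κ 𝕜 E) :
    ∑ x, ∑ l, ‖P x (M (φ x l))‖ ^ 2 ≤ ∑ i, ‖M (b i)‖ ^ 2 :=
  calc ∑ x, ∑ l, ‖P x (M (φ x l))‖ ^ 2
      ≤ ∑ x, ∑ i, ‖P x (M (b i))‖ ^ 2 :=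
        Finset.sum_le_sum fun x _ ↦
          (hφ x).sum_norm_sq_apply_le b (P x ∘ₗ M)
    _ = ∑ i, ∑ x, ‖P x (M (b i))‖ ^ 2 := Finset.sum_comm
    _ ≤ ∑ i, ‖M (b i)‖ ^ 2 := Finset.sum_le_sum fun _ _ ↦ hP _

end HilbertSchmidt

namespace Matrix

variable {α ι ι' κ κ' : Type*} [Fintype ι] [Fintype ι'] [Fintype κ] [Fintype κ']

theorem sum_norm_sq_kronecker [SeminormedRing α] [NormMulClass α]
    (A : Matrix ι ι' α) (B : Matrix κ κ' α) :
    ∑ i, ∑ j, ‖(A ⊗ₖ B) i j‖ ^ 2 = (∑ i, ∑ j, ‖A i j‖ ^ 2) * ∑ i, ∑ j, ‖B i j‖ ^ 2 := by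
  simp only [Fintype.sum_prod_type, kroneckerMap_apply, norm_mul, mul_pow, Finset.sum_mul_sum]

theorem sum_norm_sq_one [DecidableEq ι] [SeminormedRing α] [NormOneClass α] :
    ∑ i, ∑ j, ‖(1 : Matrix ι ι α) i j‖ ^ 2 = (Fintype.card ι : ℝ) := by
  simp [one_apply, apply_ite (fun a : α ↦ ‖a‖ ^ 2)]

theorem sum_norm_sq_diagonal [DecidableEq ι] [SeminormedAddCommGroup α] (d : ι → α) :
    ∑ i, ∑ j, ‖diagonal d i j‖ ^ 2 = ∑ i, ‖d i‖ ^ 2 := by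
  simp [diagonal_apply, apply_ite (fun a : α ↦ ‖a‖ ^ 2)]

theorem sum_norm_sq_toEuclideanLin_basisFun {𝕜 : Type*} [RCLike 𝕜] [DecidableEq κ]
    (A : Matrix ι κ 𝕜) :
    ∑ j, ‖toEuclideanLin A (EuclideanSpace.basisFun κ 𝕜 j)‖ ^ 2 = ∑ i, ∑ j, ‖A i j‖ ^ 2 := by
  simp only [EuclideanSpace.norm_sq_eq, EuclideanSpace.basisFun_apply, toLpLin_apply,
    PiLp.ofLp_single, mulVec_single_one, col_apply]
  exact Finset.sum_comm

end Matrix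

theorem stmt_8_general (n E m : ℕ)
    (lam : (Fin E → Bool) → ℝ) (hlam : ∀ a, 0 ≤ lam a) (hsum : ∑ a, lam a = 1)
    (Λ : Matrix (Fin E → Bool) (Fin E → Bool) ℂ)
    (hΛ : Λ = Matrix.diagonal fun a => (Real.sqrt (lam a) : ℂ))
    (φ : (Fin n → Bool) → (Fin (E - m) → Bool) →
      EuclideanSpace ℂ ((Fin m → Bool) × (Fin E → Bool)))
    (hφ : ∀ x, Orthonormal ℂ (φ x))
    (P : (Fin n → Bool) →
      EuclideanSpace ℂ ((Fin m → Bool) × (Fin E → Bool)) →ₗ[ℂ]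
        EuclideanSpace ℂ ((Fin m → Bool) × (Fin E → Bool)))
    (hle : ∀ v, ∑ x, ‖P x v‖ ^ 2 ≤ ‖v‖ ^ 2)
    (PrC : ℝ)
    (hPrC : PrC = ((2 : ℝ) ^ n)⁻¹ * ∑ x, (2 : ℝ) ^ m *
      ∑ l, ‖P x (Matrix.toEuclideanLin
        ((1 : Matrix (Fin m → Bool) (Fin m → Bool) ℂ) ⊗ₖ Λ) (φ x l))‖ ^ 2) :
    PrC ≤ (2 : ℝ) ^ (2 * m) / (2 : ℝ) ^ n := by
  set M := toEuclideanLin ((1 : Matrix (Fin m → Bool) (Fin m → Bool) ℂ) ⊗ₖ Λ)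
  have hM : ∑ j, ‖M (EuclideanSpace.basisFun _ ℂ j)‖ ^ 2 = 2 ^ m := by
    rw [sum_norm_sq_toEuclideanLin_basisFun, sum_norm_sq_kronecker, sum_norm_sq_one, hΛ,
      sum_norm_sq_diagonal]
    simp [Complex.norm_real, Real.sq_sqrt (hlam _), hsum]
  have hbound := sum_sum_norm_sq_le_of_sum_norm_sq_le P hle M hφ (EuclideanSpace.basisFun _ ℂ)
  calc PrC = ((2 : ℝ) ^ n)⁻¹ * (2 ^ m * ∑ x, ∑ l, ‖P x (M (φ x l))‖ ^ 2) := by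
        rw [hPrC, ← Finset.mul_sum]
    _ ≤ ((2 : ℝ) ^ n)⁻¹ * (2 ^ m * 2 ^ m) := by gcongr; exact hbound.trans hM.le
    _ = (2 : ℝ) ^ (2 * m) / (2 : ℝ) ^ n := by rw [div_eq_inv_mul, two_mul, pow_add]

theorem stmt_8 (n E m : ℕ) (hm : m ≤ E)
    (lam : (Fin E → Bool) → ℝ) (hlam : ∀ a, 0 ≤ lam a) (hsum : ∑ a, lam a = 1)
    (Λ : Matrix (Fin E → Bool) (Fin E → Bool) ℂ)
    (hΛ : Λ = Matrix.diagonal fun a => (Real.sqrt (lam a) : ℂ))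
    (φ : (Fin n → Bool) → (Fin (E - m) → Bool) →
      EuclideanSpace ℂ ((Fin m → Bool) × (Fin E → Bool)))
    (hφ : ∀ x, Orthonormal ℂ (φ x))
    (P : (Fin n → Bool) →
      EuclideanSpace ℂ ((Fin m → Bool) × (Fin E → Bool)) →ₗ[ℂ]
        EuclideanSpace ℂ ((Fin m → Bool) × (Fin E → Bool)))
    (hidem : ∀ x, P x ∘ₗ P x = P x)
    (hsa : ∀ x, LinearMap.adjoint (P x) = P x)
    (horth : ∀ x y, x ≠ y → P x ∘ₗ P y = 0)
    (hle : ∀ v, ∑ x, ‖P x v‖ ^ 2 ≤ ‖v‖ ^ 2)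
    (PrC : ℝ)
    (hPrC : PrC = ((2 : ℝ) ^ n)⁻¹ * ∑ x, (2 : ℝ) ^ m *
      ∑ l, ‖P x (Matrix.toEuclideanLin
        ((1 : Matrix (Fin m → Bool) (Fin m → Bool) ℂ) ⊗ₖ Λ) (φ x l))‖ ^ 2) :
    PrC ≤ (2 : ℝ) ^ (2 * m) / (2 : ℝ) ^ n :=
  stmt_8_general n E m lam hlam hsum Λ hΛ φ hφ P hle PrC hPrC
end

section
/- Let V be a unitary on ℂ^{2^{q_B}} and Λ a linear map from ℂ^{2^{q'}} to ℂ^{2^{q_B}}. Write ℂ^{2^{q_B}} ≅ ℂ^{2^p} ⊗ ℂ^{2^{q_B - p}}. Define Λ' = Σ_{b ∈ {0,1}^p} (⟨b| ⊗ I_{q_B - p}) V Λ (⟨b| ⊗ I_{q'}) as a map from ℂ^{2^p} ⊗ ℂ^{2^{q'}} to ℂ^{2^{q_B - p}}. Then Tr(Λ'Λ'†) = Tr(ΛΛ†). -/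
open Kronecker Matrix

/-- The "partial bra" `⟨b| ⊗ I` : contraction of the first (p-qubit) factor
against the standard basis vector `|b⟩`, as a matrix. -/
def braI (p : ℕ) (γ : Type*) [DecidableEq γ] [DecidableEq (Fin p → Bool)]
    (b : Fin p → Bool) : Matrix γ ((Fin p → Bool) × γ) ℂ :=
  Matrix.of fun c q => if q = (b, c) then 1 else 0

lemma braI_mul_conjT (p : ℕ) (γ : Type*) [DecidableEq γ] [Fintype γ]
    (b b' : Fin p → Bool) :
    braI p γ b * (braI p γ b')ᴴ = if b = b' then (1 : Matrix γ γ ℂ) else 0 := by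
  ext c c'
  simp only [Matrix.mul_apply, braI, Matrix.conjTranspose_apply, Matrix.of_apply]
  rw [Finset.sum_eq_single ((b, c) : (Fin p → Bool) × γ)]
  · by_cases h : b = b' <;> by_cases h' : c = c' <;>
      simp [h, h', Prod.ext_iff, Matrix.one_apply, Ne.symm, eq_comm]
  · intro q _ hq
    simp [hq]
  · simp
lemma sum_conjT_mul_braI (p : ℕ) (γ : Type*) [DecidableEq γ] [Fintype γ] :
    ∑ b : Fin p → Bool, (braI p γ b)ᴴ * braI p γ b =
      (1 : Matrix ((Fin p → Bool) × γ) ((Fin p → Bool) × γ) ℂ) := by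
  ext q q'
  simp only [Matrix.sum_apply, Matrix.mul_apply, braI, Matrix.conjTranspose_apply,
    Matrix.of_apply]
  rw [Finset.sum_comm]
  rw [Finset.sum_eq_single q.2]
  · rw [Finset.sum_eq_single q.1]
    · by_cases h : q = q' <;> simp [h, Matrix.one_apply, Prod.ext_iff, eq_comm]
    · intro b _ hb
      simp [Prod.ext_iff, hb, Ne.symm hb]
    · simp
  · intro c _ hc
    have : ∀ b : Fin p → Bool, q ≠ (b, c) := by
      intro b h; exact hc (by rw [h])
    simp [this]
  · simp

theorem stmt_10 (p qB' q' : ℕ)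
    (V : Matrix ((Fin p → Bool) × (Fin qB' → Bool)) ((Fin p → Bool) × (Fin qB' → Bool)) ℂ)
    (hV : V ∈ Matrix.unitaryGroup ((Fin p → Bool) × (Fin qB' → Bool)) ℂ)
    (Λ : Matrix ((Fin p → Bool) × (Fin qB' → Bool)) (Fin q' → Bool) ℂ)
    (Λ' : Matrix (Fin qB' → Bool) ((Fin p → Bool) × (Fin q' → Bool)) ℂ)
    (hΛ' : Λ' = ∑ b : Fin p → Bool,
      braI p (Fin qB' → Bool) b * V * Λ * braI p (Fin q' → Bool) b) :
    Matrix.trace (Λ' * Λ'ᴴ) = Matrix.trace (Λ * Λᴴ) := by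
  have hVV : Vᴴ * V = 1 := hV.1
  have key : Λ' * Λ'ᴴ =
      ∑ b : Fin p → Bool,
        braI p (Fin qB' → Bool) b * (V * (Λ * Λᴴ) * Vᴴ) * (braI p (Fin qB' → Bool) b)ᴴ := by
    rw [hΛ', Matrix.sum_mul]
    refine Finset.sum_congr rfl fun b _ => ?_
    rw [Matrix.conjTranspose_sum, Matrix.mul_sum, Finset.sum_eq_single b]
    · simp only [Matrix.conjTranspose_mul]
      have : braI p (Fin q' → Bool) b * ((braI p (Fin q' → Bool) b)ᴴ * (Λᴴ * (Vᴴ * (braI p (Fin qB' → Bool) b)ᴴ))) = Λᴴ * (Vᴴ * (braI p (Fin qB' → Bool) b)ᴴ) := by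
        rw [← Matrix.mul_assoc, braI_mul_conjT, if_pos rfl, Matrix.one_mul]
      simp only [Matrix.mul_assoc, this]
    · intro b' _ hb'
      simp only [Matrix.conjTranspose_mul]
      have : braI p (Fin q' → Bool) b * ((braI p (Fin q' → Bool) b')ᴴ * (Λᴴ * (Vᴴ * (braI p (Fin qB' → Bool) b')ᴴ))) = 0 := by
        rw [← Matrix.mul_assoc, braI_mul_conjT, if_neg (Ne.symm hb'), Matrix.zero_mul]
      simp only [Matrix.mul_assoc, this, Matrix.mul_zero]
    · simp
  rw [key, Matrix.trace_sum]
  have : ∀ b : Fin p → Bool,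
      Matrix.trace (braI p (Fin qB' → Bool) b * (V * (Λ * Λᴴ) * Vᴴ) * (braI p (Fin qB' → Bool) b)ᴴ)
        = Matrix.trace ((V * (Λ * Λᴴ) * Vᴴ) * ((braI p (Fin qB' → Bool) b)ᴴ * braI p (Fin qB' → Bool) b)) := by
    intro b
    rw [Matrix.mul_assoc, Matrix.trace_mul_comm, Matrix.mul_assoc]
  simp_rw [this]
  rw [← Matrix.trace_sum]
  rw [← Matrix.mul_sum, sum_conjT_mul_braI, Matrix.mul_one]
  rw [Matrix.trace_mul_cycle, ← Matrix.mul_assoc, hVV, Matrix.one_mul]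
end

section
/- Under the hypotheses that Bob's final state in an interactive quantum protocol is {Λ|φ_{x,l}⟩}_l for input x ∈ {0,1}^n, where Λ is a fixed linear operator with Tr(ΛΛ†) = 2^{2m_A} independent of x, each {|φ_{x,l}⟩}_l is orthonormal, and Bob measures with orthogonal projections {P_x} whose ranges are mutually orthogonal with Σ_x P_x ≤ I, the success probability Pr[C] = 2^{-n} Σ_{x,l} ‖P_x Λ|φ_{x,l}⟩‖² satisfies Pr[C] ≤ 2^{2m_A}/2^n. -/
open scoped InnerProductSpace

local notation "⟪" x ", " y "⟫" => @inner ℂ _ _ x y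

private lemma parseval_aux {ι E : Type*} [NormedAddCommGroup E] [InnerProductSpace ℂ E]
    [Fintype ι] (b : OrthonormalBasis ι ℂ E) (v : E) :
    ∑ i, ‖⟪b i, v⟫‖ ^ 2 = ‖v‖ ^ 2 := by
  have h := b.repr.norm_map v
  rw [EuclideanSpace.norm_eq] at h
  have h2 : ‖v‖ ^ 2 = ∑ i, ‖b.repr v i‖ ^ 2 := by
    rw [← h, Real.sq_sqrt (by positivity)]
  rw [h2]
  simp_rw [b.repr_apply_apply]

private lemma trace_onb_aux {ι E : Type*} [NormedAddCommGroup E] [InnerProductSpace ℂ E]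
    [FiniteDimensional ℂ E] [Fintype ι] [DecidableEq ι]
    (b : OrthonormalBasis ι ℂ E) (T : E →ₗ[ℂ] E) :
    LinearMap.trace ℂ E T = ∑ i, ⟪b i, T (b i)⟫ := by
  rw [LinearMap.trace_eq_matrix_trace ℂ b.toBasis, Matrix.trace]
  refine Finset.sum_congr rfl fun i _ => ?_
  rw [Matrix.diag_apply, LinearMap.toMatrix_apply, OrthonormalBasis.coe_toBasis,
    OrthonormalBasis.coe_toBasis_repr_apply, OrthonormalBasis.repr_apply_apply]

private lemma adjoint_sum_sq_aux {E F ι κ : Type*} [NormedAddCommGroup E]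
    [InnerProductSpace ℂ E] [FiniteDimensional ℂ E] [NormedAddCommGroup F]
    [InnerProductSpace ℂ F] [FiniteDimensional ℂ F] [Fintype ι] [Fintype κ]
    (e : OrthonormalBasis ι ℂ E) (f : OrthonormalBasis κ ℂ F) (B : E →ₗ[ℂ] F) :
    ∑ j, ‖LinearMap.adjoint B (f j)‖ ^ 2 = ∑ i, ‖B (e i)‖ ^ 2 := by
  have h1 : ∀ j, ‖LinearMap.adjoint B (f j)‖ ^ 2 = ∑ i, ‖⟪f j, B (e i)⟫‖ ^ 2 := by
    intro j
    rw [← parseval_aux e (LinearMap.adjoint B (f j))]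
    refine Finset.sum_congr rfl fun i _ => ?_
    rw [LinearMap.adjoint_inner_right, norm_inner_symm]
  have h2 : ∀ i, ‖B (e i)‖ ^ 2 = ∑ j, ‖⟪f j, B (e i)⟫‖ ^ 2 :=
    fun i => (parseval_aux f (B (e i))).symm
  simp_rw [h1, h2]
  rw [Finset.sum_comm]

theorem stmt_13 {K K' : Type*} [NormedAddCommGroup K] [InnerProductSpace ℂ K]
    [FiniteDimensional ℂ K] [NormedAddCommGroup K'] [InnerProductSpace ℂ K']
    [FiniteDimensional ℂ K'] {L : Type*} [Fintype L] (n mA : ℕ)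
    (Λ : K' →ₗ[ℂ] K)
    (hΛ : LinearMap.trace ℂ K (Λ ∘ₗ LinearMap.adjoint Λ) = (2 : ℂ) ^ (2 * mA))
    (φ : (Fin n → Bool) → L → K') (hφ : ∀ x, Orthonormal ℂ (φ x))
    (P : (Fin n → Bool) → K →ₗ[ℂ] K)
    (hidem : ∀ x, P x ∘ₗ P x = P x)
    (hsa : ∀ x, LinearMap.adjoint (P x) = P x)
    (horth : ∀ x y, x ≠ y → P x ∘ₗ P y = 0)
    (hle : ∀ v : K, ∑ x, ‖P x v‖ ^ 2 ≤ ‖v‖ ^ 2)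
    (PrC : ℝ)
    (hPrC : PrC = ((2 : ℝ) ^ n)⁻¹ * ∑ x, ∑ l, ‖P x (Λ (φ x l))‖ ^ 2) :
    PrC ≤ (2 : ℝ) ^ (2 * mA) / (2 : ℝ) ^ n := by
  classical
  set e := stdOrthonormalBasis ℂ K'
  set f := stdOrthonormalBasis ℂ K
  -- Step D: ∑ i ‖Λ (e i)‖² = 2^(2mA)
  have hD : ∑ i, ‖Λ (e i)‖ ^ 2 = (2 : ℝ) ^ (2 * mA) := by
    have ht := trace_onb_aux f (Λ ∘ₗ LinearMap.adjoint Λ)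
    rw [hΛ] at ht
    have h1 : ∀ j, ⟪f j, (Λ ∘ₗ LinearMap.adjoint Λ) (f j)⟫
        = ((‖LinearMap.adjoint Λ (f j)‖ ^ 2 : ℝ) : ℂ) := by
      intro j
      rw [LinearMap.comp_apply, ← LinearMap.adjoint_inner_left,
        inner_self_eq_norm_sq_to_K]
      norm_cast
    rw [Finset.sum_congr rfl fun j _ => h1 j] at ht
    have h2 : ((∑ j, ‖LinearMap.adjoint Λ (f j)‖ ^ 2 : ℝ) : ℂ) = (2 : ℂ) ^ (2 * mA) := by
      push_cast at ht ⊢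
      exact ht.symm
    have h3 : ∑ j, ‖LinearMap.adjoint Λ (f j)‖ ^ 2 = (2 : ℝ) ^ (2 * mA) := by
      exact_mod_cast h2
    rw [← adjoint_sum_sq_aux e f Λ, h3]
  -- Step A + B: per x bound
  have hAB : ∀ x, ∑ l, ‖P x (Λ (φ x l))‖ ^ 2 ≤ ∑ i, ‖P x (Λ (e i))‖ ^ 2 := by
    intro x
    set A : K' →ₗ[ℂ] K := P x ∘ₗ Λ with hA
    have step1 : ∑ l, ‖P x (Λ (φ x l))‖ ^ 2
        = ∑ j, ∑ l, ‖⟪φ x l, LinearMap.adjoint A (f j)⟫‖ ^ 2 := by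
      rw [Finset.sum_comm]
      refine Finset.sum_congr rfl fun l _ => ?_
      have : (‖P x (Λ (φ x l))‖ : ℝ) ^ 2 = ∑ j, ‖⟪f j, A (φ x l)⟫‖ ^ 2 :=
        (parseval_aux f (A (φ x l))).symm
      rw [this]
      refine Finset.sum_congr rfl fun j _ => ?_
      rw [norm_inner_symm, LinearMap.adjoint_inner_right, norm_inner_symm]
    have step2 : ∑ j, ∑ l, ‖⟪φ x l, LinearMap.adjoint A (f j)⟫‖ ^ 2
        ≤ ∑ j, ‖LinearMap.adjoint A (f j)‖ ^ 2 :=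
      Finset.sum_le_sum fun j _ => (hφ x).sum_inner_products_le _
    have step3 : ∑ j, ‖LinearMap.adjoint A (f j)‖ ^ 2 = ∑ i, ‖A (e i)‖ ^ 2 :=
      adjoint_sum_sq_aux e f A
    calc ∑ l, ‖P x (Λ (φ x l))‖ ^ 2
        = ∑ j, ∑ l, ‖⟪φ x l, LinearMap.adjoint A (f j)⟫‖ ^ 2 := step1
      _ ≤ ∑ j, ‖LinearMap.adjoint A (f j)‖ ^ 2 := step2
      _ = ∑ i, ‖A (e i)‖ ^ 2 := step3
      _ = ∑ i, ‖P x (Λ (e i))‖ ^ 2 := rfl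
  -- Step C: sum over x
  have hC : ∑ x, ∑ i, ‖P x (Λ (e i))‖ ^ 2 ≤ (2 : ℝ) ^ (2 * mA) := by
    rw [Finset.sum_comm, ← hD]
    exact Finset.sum_le_sum fun i _ => hle (Λ (e i))
  have hS : ∑ x, ∑ l, ‖P x (Λ (φ x l))‖ ^ 2 ≤ (2 : ℝ) ^ (2 * mA) :=
    le_trans (Finset.sum_le_sum fun x _ => hAB x) hC
  rw [hPrC, div_eq_inv_mul]
  exact mul_le_mul_of_nonneg_left hS (by positivity)
end
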